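/- arXiv:2004.04672 — 6 statements merged into one kernel-verified Lean document; each statement's English description precedes it below -/
import Mathlib

section
/- Every tree on n ≥ 2 vertices, for any integer k > 2, either has at least n/(4k) leaves or contains a collection of at least n/(4k) vertex-disjoint bare paths (paths whose internal vertices all have degree exactly 2 in the tree) each of length k. -/
open Finset SimpleGraph

set_option linter.unusedSectionVars false
set_option maxHeartbeats 1000000

namespace KrivAux

variable {V : Type} [Fintype V] [DecidableEq V] {T : SimpleGraph V} [DecidableRel T.Adj]

lemma dist_lt_of_mem_support {u r x : V} (w : T.Walk u r)
    (hlen : w.length = T.dist u r) (hx : x ∈ w.support) (hxu : x ≠ u) :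
    T.dist x r < T.dist u r := by
  have hspec := w.take_spec hx
  have hlen2 : (w.takeUntil x hx).length + (w.dropUntil x hx).length = w.length := by
    conv_rhs => rw [← hspec]
    rw [SimpleGraph.Walk.length_append]
  have h1 : 1 ≤ (w.takeUntil x hx).length := by
    by_contra h
    push_neg at h
    have h' : (w.takeUntil x hx).length = 0 := by omega
    exact hxu (SimpleGraph.Walk.eq_of_length_eq_zero h').symm
  have h2 : T.dist x r ≤ (w.dropUntil x hx).length := SimpleGraph.dist_le _
  omega

lemma exists_parent (hT : T.IsTree) (r v : V) (hv : v ≠ r) :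
    ∃ u, T.Adj v u ∧ T.dist u r + 1 = T.dist v r := by
  obtain ⟨w, hw⟩ := (hT.isConnected v r).exists_walk_length_eq_dist
  have hpos : 0 < T.dist v r := (hT.isConnected v r).pos_dist_of_ne hv
  cases w with
  | nil => exact absurd rfl hv
  | cons h p =>
      rename_i u
      refine ⟨u, h, ?_⟩
      simp only [SimpleGraph.Walk.length_cons] at hw
      have h1 : T.dist u r ≤ p.length := SimpleGraph.dist_le p
      have h2 : T.dist v r ≤ T.dist u r + 1 := by
        obtain ⟨q, hq⟩ := (hT.isConnected u r).exists_walk_length_eq_dist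
        have := SimpleGraph.dist_le (SimpleGraph.Walk.cons h q)
        simpa [SimpleGraph.Walk.length_cons, hq] using this
      omega

lemma parent_unique (hT : T.IsTree) {r v u u' : V} (hu : T.Adj v u)
    (hd : T.dist u r + 1 = T.dist v r) (hu' : T.Adj v u')
    (hd' : T.dist u' r + 1 = T.dist v r) : u = u' := by
  obtain ⟨w, hw⟩ := (hT.isConnected u r).exists_walk_length_eq_dist
  obtain ⟨w', hw'⟩ := (hT.isConnected u' r).exists_walk_length_eq_dist
  have hvw : v ∉ w.support := by
    intro hmem
    have := dist_lt_of_mem_support w hw hmem (fun h => (h ▸ hu).ne rfl)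
    omega
  have hvw' : v ∉ w'.support := by
    intro hmem
    have := dist_lt_of_mem_support w' hw' hmem (fun h => (h ▸ hu').ne rfl)
    omega
  have hp : (SimpleGraph.Walk.cons hu w).IsPath :=
    (w.isPath_of_length_eq_dist hw).cons hvw
  have hp' : (SimpleGraph.Walk.cons hu' w').IsPath :=
    (w'.isPath_of_length_eq_dist hw').cons hvw'
  have := (hT.existsUnique_path v r).unique hp hp'
  have hsup := congrArg SimpleGraph.Walk.support this
  rw [SimpleGraph.Walk.support_cons, SimpleGraph.Walk.support_cons,
    w.support_eq_cons, w'.support_eq_cons] at hsup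
  simp only [List.cons.injEq] at hsup
  exact hsup.2.1

lemma adj_dist_cases (hT : T.IsTree) (r : V) {u v : V} (h : T.Adj u v) :
    T.dist u r + 1 = T.dist v r ∨ T.dist v r + 1 = T.dist u r := by
  have key : ∀ a b : V, T.Adj a b → T.dist a r ≤ T.dist b r →
      T.dist a r + 1 = T.dist b r := by
    intro a b hab hle
    have htri : T.dist b r ≤ T.dist a r + 1 := by
      obtain ⟨q, hq⟩ := (hT.isConnected a r).exists_walk_length_eq_dist
      have := SimpleGraph.dist_le (SimpleGraph.Walk.cons hab.symm q)
      simpa [SimpleGraph.Walk.length_cons, hq] using this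
    rcases Nat.lt_or_ge (T.dist a r) (T.dist b r) with hlt | hge
    · omega
    · exfalso
      have heq : T.dist a r = T.dist b r := le_antisymm hle hge
      obtain ⟨w, hw⟩ := (hT.isConnected a r).exists_walk_length_eq_dist
      obtain ⟨w', hw'⟩ := (hT.isConnected b r).exists_walk_length_eq_dist
      have hbw : b ∉ w.support := by
        intro hmem
        have := dist_lt_of_mem_support w hw hmem hab.ne'
        omega
      have hp : (SimpleGraph.Walk.cons hab.symm w).IsPath :=
        (w.isPath_of_length_eq_dist hw).cons hbw
      have hp' : w'.IsPath := w'.isPath_of_length_eq_dist hw'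
      have := (hT.existsUnique_path b r).unique hp hp'
      have hlen := congrArg SimpleGraph.Walk.length this
      rw [SimpleGraph.Walk.length_cons, hw, hw'] at hlen
      omega
  rcases le_total (T.dist u r) (T.dist v r) with hle | hle
  · exact Or.inl (key u v h hle)
  · exact Or.inr (key v u h.symm hle)

noncomputable def par (hT : T.IsTree) (r : V) (v : V) : V :=
  if h : v = r then r else (exists_parent hT r v h).choose

lemma par_root (hT : T.IsTree) (r : V) : par hT r r = r := dif_pos rfl

lemma par_adj (hT : T.IsTree) (r : V) {v : V} (hv : v ≠ r) : T.Adj v (par hT r v) := by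
  rw [par, dif_neg hv]; exact (exists_parent hT r v hv).choose_spec.1

lemma par_dist (hT : T.IsTree) (r : V) {v : V} (hv : v ≠ r) :
    T.dist (par hT r v) r + 1 = T.dist v r := by
  rw [par, dif_neg hv]; exact (exists_parent hT r v hv).choose_spec.2

lemma par_eq_of (hT : T.IsTree) (r : V) {v u : V} (hadj : T.Adj v u)
    (hd : T.dist u r + 1 = T.dist v r) : par hT r v = u := by
  have hv : v ≠ r := by
    intro h; subst h
    rw [SimpleGraph.dist_self] at hd; omega
  exact parent_unique hT (par_adj hT r hv) (par_dist hT r hv) hadj hd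

lemma iterate_par_root (hT : T.IsTree) (r : V) (v : V) :
    (par hT r)^[T.dist v r] v = r := by
  generalize hd : T.dist v r = d
  induction d generalizing v with
  | zero =>
      simpa using (hT.isConnected.dist_eq_zero_iff).mp hd
  | succ d ih =>
      have hv : v ≠ r := by
        intro h; subst h; rw [SimpleGraph.dist_self] at hd; omega
      rw [Function.iterate_succ_apply]
      exact ih _ (by have := par_dist hT r hv; omega)

lemma exists_stop (hT : T.IsTree) (r b : V) :
    ∃ t, 1 ≤ t ∧ ((par hT r)^[t] b = r ∨ T.degree ((par hT r)^[t] b) ≠ 2) := by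
  refine ⟨T.dist b r + 1, by omega, Or.inl ?_⟩
  rw [Function.iterate_succ_apply', iterate_par_root, par_root]

noncomputable def sb (hT : T.IsTree) (r b : V) : ℕ := Nat.find (exists_stop hT r b)

lemma sb_pos (hT : T.IsTree) (r b : V) : 1 ≤ sb hT r b :=
  (Nat.find_spec (exists_stop hT r b)).1

lemma sb_spec (hT : T.IsTree) (r b : V) :
    (par hT r)^[sb hT r b] b = r ∨ T.degree ((par hT r)^[sb hT r b] b) ≠ 2 :=
  (Nat.find_spec (exists_stop hT r b)).2

lemma sb_min (hT : T.IsTree) (r b : V) {t : ℕ} (h1 : 1 ≤ t) (h2 : t < sb hT r b) :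
    (par hT r)^[t] b ≠ r ∧ T.degree ((par hT r)^[t] b) = 2 := by
  have := Nat.find_min (exists_stop hT r b) h2
  push_neg at this
  exact (this h1)

/-- `Rep b i v`: vertex `v` is the `i`-th element of the chain based at bad vertex `b`. -/
def Rep (hT : T.IsTree) (r b : V) (i : ℕ) (v : V) : Prop :=
  (b ≠ r ∧ T.degree b ≠ 2) ∧ i < sb hT r b ∧ v = (par hT r)^[i] b

lemma rep_ne_root (hT : T.IsTree) {r b : V} {i : ℕ} {v : V} (h : Rep hT r b i v) :
    v ≠ r := by
  obtain ⟨⟨hbr, _⟩, hi, rfl⟩ := h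
  rcases Nat.eq_zero_or_pos i with h0 | h0
  · subst h0; simpa using hbr
  · exact (sb_min hT r b h0 hi).1

lemma rep_interior_deg (hT : T.IsTree) {r b : V} {i : ℕ} {v : V} (h : Rep hT r b i v)
    (h1 : 1 ≤ i) : T.degree v = 2 := by
  obtain ⟨_, hi, rfl⟩ := h
  exact (sb_min hT r b h1 hi).2

lemma rep_dist (hT : T.IsTree) {r b : V} {i : ℕ} {v : V} (h : Rep hT r b i v) :
    T.dist v r + i = T.dist b r := by
  obtain ⟨hb, hi, rfl⟩ := h
  induction i with
  | zero => simp
  | succ j ih =>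
      have hj : j < sb hT r b := by omega
      have hne : (par hT r)^[j] b ≠ r := rep_ne_root hT ⟨hb, hj, rfl⟩
      have := par_dist hT r hne
      rw [Function.iterate_succ_apply']
      have ihj := ih hj
      omega

lemma down_unique (hT : T.IsTree) (r : V) {v x x' : V} (hv : v ≠ r)
    (hdeg : T.degree v = 2) (hx : T.Adj v x) (hdx : T.dist x r = T.dist v r + 1)
    (hx' : T.Adj v x') (hdx' : T.dist x' r = T.dist v r + 1) : x = x' := by
  have hpv := par_adj hT r hv
  have hpd := par_dist hT r hv
  have hxp : x ≠ par hT r v := by intro h; rw [h] at hdx; omega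
  have hxp' : x' ≠ par hT r v := by intro h; rw [h] at hdx'; omega
  have hsub : ({par hT r v, x} : Finset V) ⊆ T.neighborFinset v := by
    intro a ha
    simp only [Finset.mem_insert, Finset.mem_singleton] at ha
    rcases ha with rfl | rfl
    · exact (SimpleGraph.mem_neighborFinset _ _ _).mpr hpv
    · exact (SimpleGraph.mem_neighborFinset _ _ _).mpr hx
  have hcard : ({par hT r v, x} : Finset V).card = 2 := by
    rw [Finset.card_insert_of_notMem (by simpa using (Ne.symm hxp)), Finset.card_singleton]
  have heq : ({par hT r v, x} : Finset V) = T.neighborFinset v := by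
    apply Finset.eq_of_subset_of_card_le hsub
    rw [hcard, card_neighborFinset_eq_degree, hdeg]
  have : x' ∈ ({par hT r v, x} : Finset V) := by
    rw [heq]; exact (SimpleGraph.mem_neighborFinset _ _ _).mpr hx'
  simp only [Finset.mem_insert, Finset.mem_singleton] at this
  rcases this with h | h
  · exact absurd h hxp'
  · exact h.symm

lemma down_exists (hT : T.IsTree) (r : V) {v : V} (hv : v ≠ r) (hdeg : T.degree v = 2) :
    ∃ c, T.Adj v c ∧ T.dist c r = T.dist v r + 1 ∧ par hT r c = v := by
  have hpv := par_adj hT r hv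
  have hpd := par_dist hT r hv
  have h2 : 1 < (T.neighborFinset v).card := by
    rw [card_neighborFinset_eq_degree, hdeg]; omega
  obtain ⟨c, hc, hcp⟩ := Finset.exists_mem_ne h2 (par hT r v)
  rw [SimpleGraph.mem_neighborFinset] at hc
  have hdc : T.dist c r = T.dist v r + 1 := by
    rcases adj_dist_cases hT r hc with h | h
    · omega
    · exact absurd (parent_unique hT hpv hpd hc h).symm hcp
  have hcr : c ≠ r := by
    intro h; subst h; rw [SimpleGraph.dist_self] at hdc; omega
  refine ⟨c, hc, hdc, ?_⟩
  exact par_eq_of hT r hc.symm (by omega)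

lemma dist_lt_card (hT : T.IsTree) (u r : V) : T.dist u r < Fintype.card V := by
  obtain ⟨w, hw⟩ := (hT.isConnected u r).exists_walk_length_eq_dist
  have := (w.isPath_of_length_eq_dist hw).length_lt
  omega

lemma rep_exists (hT : T.IsTree) (r : V) (v : V) (hv : v ≠ r) :
    ∃ b i, Rep hT r b i v := by
  have main : ∀ t v, Fintype.card V - T.dist v r ≤ t → v ≠ r → ∃ b i, Rep hT r b i v := by
    intro t
    induction t with
    | zero =>
        intro v hle hv
        have := dist_lt_card hT v r
        omega
    | succ t ih =>
        intro v hle hv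
        by_cases hdeg : T.degree v = 2
        · obtain ⟨c, hc, hdc, hpc⟩ := down_exists hT r hv hdeg
          have hcr : c ≠ r := by
            intro h; subst h; rw [SimpleGraph.dist_self] at hdc; omega
          have hrec : Fintype.card V - T.dist c r ≤ t := by
            have := dist_lt_card hT c r
            omega
          obtain ⟨b, i, hrep⟩ := ih c hrec hcr
          obtain ⟨hb, hi, hc_eq⟩ := hrep
          have hv_eq : v = (par hT r)^[i + 1] b := by
            rw [Function.iterate_succ_apply', ← hc_eq, hpc]
          refine ⟨b, i + 1, hb, ?_, hv_eq⟩
          rcases Nat.lt_or_ge (i + 1) (sb hT r b) with h | h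
          · exact h
          · exfalso
            have hsb : sb hT r b = i + 1 := by omega
            rcases sb_spec hT r b with hroot | hbad
            · rw [hsb, ← hv_eq] at hroot; exact hv hroot
            · rw [hsb, ← hv_eq] at hbad; exact hbad hdeg
        · exact ⟨v, 0, ⟨hv, hdeg⟩, sb_pos hT r v, rfl⟩
  exact main _ v le_rfl hv

lemma rep_unique (hT : T.IsTree) (r : V) :
    ∀ (i : ℕ) (b : V) (i' : ℕ) (b' : V) (v : V),
      Rep hT r b i v → Rep hT r b' i' v → b = b' ∧ i = i' := by
  intro i
  induction i with
  | zero =>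
      intro b i' b' v h h'
      obtain ⟨⟨hbr, hbd⟩, _, hv⟩ := h
      simp only [Function.iterate_zero, id_eq] at hv
      rcases Nat.eq_zero_or_pos i' with h0 | h0
      · subst h0
        obtain ⟨_, _, hv'⟩ := h'
        simp only [Function.iterate_zero, id_eq] at hv'
        exact ⟨hv ▸ hv' ▸ rfl, rfl⟩
      · exact absurd (hv ▸ rep_interior_deg hT h' h0) hbd
  | succ i ih =>
      intro b i' b' v h h'
      have hdeg : T.degree v = 2 := rep_interior_deg hT h (by omega)
      have hvr : v ≠ r := rep_ne_root hT h
      rcases i' with _ | j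
      · obtain ⟨⟨_, hbd'⟩, _, hv'⟩ := h'
        simp only [Function.iterate_zero, id_eq] at hv'
        exact absurd (hv' ▸ hdeg) hbd'
      · obtain ⟨hb, hi, hv⟩ := h
        obtain ⟨hb', hj, hv'⟩ := h'
        have hxrep : Rep hT r b i ((par hT r)^[i] b) := ⟨hb, by omega, rfl⟩
        have hx'rep : Rep hT r b' j ((par hT r)^[j] b') := ⟨hb', by omega, rfl⟩
        have hxr : (par hT r)^[i] b ≠ r := rep_ne_root hT hxrep
        have hx'r : (par hT r)^[j] b' ≠ r := rep_ne_root hT hx'rep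
        have hpx : par hT r ((par hT r)^[i] b) = v := by
          rw [hv, Function.iterate_succ_apply']
        have hpx' : par hT r ((par hT r)^[j] b') = v := by
          rw [hv', Function.iterate_succ_apply']
        have hdx : T.dist ((par hT r)^[i] b) r = T.dist v r + 1 := by
          have := par_dist hT r hxr
          rw [hpx] at this; omega
        have hdx' : T.dist ((par hT r)^[j] b') r = T.dist v r + 1 := by
          have := par_dist hT r hx'r
          rw [hpx'] at this; omega
        have hadjx : T.Adj v ((par hT r)^[i] b) := by
          have := par_adj hT r hxr
          rw [hpx] at this; exact this.symm
        have hadjx' : T.Adj v ((par hT r)^[j] b') := by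
          have := par_adj hT r hx'r
          rw [hpx'] at this; exact this.symm
        have hxx : (par hT r)^[i] b = (par hT r)^[j] b' :=
          down_unique hT r hvr hdeg hadjx hdx hadjx' hdx'
        obtain ⟨hbb, hii⟩ := ih b j b' _ hxrep (hxx ▸ hx'rep)
        exact ⟨hbb, by omega⟩

lemma deg_pos (hT : T.IsTree) (h2 : 2 ≤ Fintype.card V) (v : V) : 0 < T.degree v := by
  obtain ⟨w, hw⟩ := Fintype.exists_ne_of_one_lt_card (by omega) v
  obtain ⟨p⟩ := hT.isConnected v w
  cases p with
  | nil => exact absurd rfl hw.symm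
  | cons h _ => exact (T.degree_pos_iff_exists_adj v).mpr ⟨_, h⟩

lemma leaf_branch_bound (hT : T.IsTree) (h2 : 2 ≤ Fintype.card V) :
    (univ.filter fun v => 3 ≤ T.degree v).card + 2 ≤
      (univ.filter fun v => T.degree v = 1).card := by
  have hE : T.edgeFinset.card + 1 = Fintype.card V := hT.card_edgeFinset
  have hsum : ∑ v, T.degree v = 2 * T.edgeFinset.card :=
    T.sum_degrees_eq_twice_card_edges
  have hpt : ∀ v : V, 2 + (if 3 ≤ T.degree v then 1 else 0) ≤
      T.degree v + (if T.degree v = 1 then 1 else 0) := by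
    intro v
    have := deg_pos hT h2 v
    split_ifs <;> omega
  have hsum2 : ∑ v : V, (2 + (if 3 ≤ T.degree v then 1 else 0)) ≤
      ∑ v : V, (T.degree v + (if T.degree v = 1 then 1 else 0)) :=
    Finset.sum_le_sum (fun v _ => hpt v)
  rw [Finset.sum_add_distrib, Finset.sum_add_distrib, Finset.sum_const,
    card_univ, smul_eq_mul] at hsum2
  rw [← Finset.card_filter, ← Finset.card_filter, hsum] at hsum2
  omega

end KrivAux

open KrivAux in
/-- Krivelevich's dichotomy: every tree on `n ≥ 2` vertices either has at least
`n/(4k)` leaves or contains at least `n/(4k)` vertex-disjoint bare paths of length `k`. -/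
theorem stmt0 {V : Type} [Fintype V] [DecidableEq V] (T : SimpleGraph V)
    [DecidableRel T.Adj] (hT : T.IsTree) (n k : ℕ)
    (hn : Fintype.card V = n) (hn2 : 2 ≤ n) (hk : 2 < k) :
    ((n : ℚ) / (4 * k) ≤ (Finset.univ.filter fun v => T.degree v = 1).card) ∨
    (∃ (m : ℕ) (P : Fin m → (Fin (k + 1) → V)),
      (n : ℚ) / (4 * k) ≤ m ∧
      (∀ i, Function.Injective (P i)) ∧
      (∀ i, ∀ j : Fin k, T.Adj (P i j.castSucc) (P i j.succ)) ∧
      (∀ i, ∀ j : Fin (k + 1), j ≠ 0 → j ≠ Fin.last k → T.degree (P i j) = 2) ∧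
      (∀ i j, i ≠ j → ∀ a b, P i a ≠ P j b)) := by
  classical
  by_cases hLcase : (n : ℚ) / (4 * k) ≤ ((Finset.univ.filter fun v => T.degree v = 1).card : ℚ)
  · exact Or.inl hLcase
  right
  push_neg at hLcase
  have hcardV : 2 ≤ Fintype.card V := by rw [hn]; exact hn2
  have hVne : Nonempty V := Fintype.card_pos_iff.mp (by omega)
  obtain ⟨r⟩ := hVne
  set L := (Finset.univ.filter fun v => T.degree v = 1).card with hLdef
  set StF : Finset V := univ.filter
    (fun v => ∃ b i, Rep hT r b i v ∧ (k + 1) ∣ i ∧ i + k < sb hT r b) with hStF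
  set BF : Finset V := univ.filter (fun b => b ≠ r ∧ T.degree b ≠ 2) with hBFdef
  set m := StF.card with hm
  set e := StF.equivFin with he
  have hmemSt : ∀ v : V, v ∈ StF → ∃ b iv, Rep hT r b iv v ∧
      (k + 1) ∣ iv ∧ iv + k < sb hT r b := by
    intro v hv
    rw [hStF, Finset.mem_filter] at hv
    exact hv.2
  have hstart : ∀ i : Fin m, ∃ b iv, Rep hT r b iv ((e.symm i : StF) : V) ∧
      (k + 1) ∣ iv ∧ iv + k < sb hT r b := fun i => hmemSt _ (e.symm i).2
  have hPrep : ∀ (v b : V) (iv : ℕ), Rep hT r b iv v → iv + k < sb hT r b →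
      ∀ j, j ≤ k → Rep hT r b (iv + j) ((par hT r)^[j] v) := by
    rintro v b iv ⟨hb, hiv, rfl⟩ hik j hj
    exact ⟨hb, by omega, by rw [add_comm iv j, Function.iterate_add_apply]⟩
  refine ⟨m, fun i j => (par hT r)^[(j : ℕ)] ((e.symm i : StF) : V), ?_, ?_, ?_, ?_, ?_⟩
  · -- the counting bound
    have hk1 : 0 < k := by omega
    set F : V → ℕ → (V × Fin (k+1)) ⊕ (V × Fin k) := fun b i =>
      if (k+1) * (i / (k+1)) + k < sb hT r b then
        Sum.inl ((par hT r)^[(k+1) * (i / (k+1))] b,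
          ⟨i % (k+1), Nat.mod_lt _ (Nat.succ_pos k)⟩)
      else
        Sum.inr (b, ⟨min (sb hT r b - 1 - i) (k-1), by omega⟩) with hF
    set f : V → (V × Fin (k+1)) ⊕ (V × Fin k) := fun v =>
      if h : ∃ bi : V × ℕ, Rep hT r bi.1 bi.2 v then F h.choose.1 h.choose.2
      else Sum.inr (r, ⟨0, hk1⟩) with hf
    have hfeq : ∀ v b i, Rep hT r b i v → f v = F b i := by
      intro v b i hrep
      have hex : ∃ bi : V × ℕ, Rep hT r bi.1 bi.2 v := ⟨(b, i), hrep⟩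
      have hch := hex.choose_spec
      obtain ⟨h1, h2⟩ := rep_unique hT r _ _ _ _ _ hch hrep
      simp only [hf]
      rw [dif_pos hex, h1, h2]
    have hdivle : ∀ i : ℕ, (k+1) * (i / (k+1)) ≤ i := by
      intro i
      rw [mul_comm]
      exact Nat.div_mul_le_self i (k+1)
    have hmodeq : ∀ i : ℕ, (k+1) * (i / (k+1)) + i % (k+1) = i := fun i =>
      Nat.div_add_mod i (k+1)
    have hmaps : ∀ v ∈ univ.erase r,
        f v ∈ (StF ×ˢ (univ : Finset (Fin (k+1)))).disjSum (BF ×ˢ (univ : Finset (Fin k))) := by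
      intro v hv
      have hvr : v ≠ r := (Finset.mem_erase.mp hv).1
      obtain ⟨b, i, hrep⟩ := rep_exists hT r v hvr
      rw [hfeq v b i hrep]
      simp only [hF]
      by_cases hcond : (k+1) * (i / (k+1)) + k < sb hT r b
      · rw [if_pos hcond]
        rw [Finset.inl_mem_disjSum, Finset.mem_product]
        refine ⟨?_, Finset.mem_univ _⟩
        rw [hStF, Finset.mem_filter]
        refine ⟨Finset.mem_univ _, b, (k+1)*(i/(k+1)),
          ⟨hrep.1, ?_, rfl⟩, dvd_mul_right _ _, hcond⟩
        have h1 := hdivle i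
        have h2 := hrep.2.1
        omega
      · rw [if_neg hcond]
        rw [Finset.inr_mem_disjSum, Finset.mem_product]
        refine ⟨?_, Finset.mem_univ _⟩
        rw [hBFdef, Finset.mem_filter]
        exact ⟨Finset.mem_univ _, hrep.1⟩
    have hinj : Set.InjOn f (univ.erase r) := by
      intro v hv v' hv' heq
      rw [Finset.mem_coe, Finset.mem_erase] at hv hv'
      obtain ⟨b, i, hrep⟩ := rep_exists hT r v hv.1
      obtain ⟨b', i', hrep'⟩ := rep_exists hT r v' hv'.1
      rw [hfeq v b i hrep, hfeq v' b' i' hrep'] at heq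
      simp only [hF] at heq
      have hle := hdivle i
      have hle' := hdivle i'
      have hmod := hmodeq i
      have hmod' := hmodeq i'
      have hi := hrep.2.1
      have hi' := hrep'.2.1
      by_cases h1 : (k+1) * (i / (k+1)) + k < sb hT r b <;>
        by_cases h2 : (k+1) * (i' / (k+1)) + k < sb hT r b'
      · rw [if_pos h1, if_pos h2] at heq
        simp only [Sum.inl.injEq, Prod.mk.injEq, Fin.mk.injEq] at heq
        obtain ⟨hveq, hmeq⟩ := heq
        have r1 : Rep hT r b ((k+1)*(i/(k+1))) ((par hT r)^[(k+1)*(i/(k+1))] b) :=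
          ⟨hrep.1, by omega, rfl⟩
        have r2 : Rep hT r b' ((k+1)*(i'/(k+1))) ((par hT r)^[(k+1)*(i'/(k+1))] b') :=
          ⟨hrep'.1, by omega, rfl⟩
        rw [hveq] at r1
        obtain ⟨hbeq, hieq⟩ := rep_unique hT r _ _ _ _ _ r1 r2
        have : i = i' := by linarith
        rw [hrep.2.2, hrep'.2.2, hbeq, this]
      · rw [if_pos h1, if_neg h2] at heq
        exact absurd heq (by simp)
      · rw [if_neg h1, if_pos h2] at heq
        exact absurd heq (by simp)
      · rw [if_neg h1, if_neg h2] at heq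
        simp only [Sum.inr.injEq, Prod.mk.injEq, Fin.mk.injEq] at heq
        obtain ⟨hbeq, hmineq⟩ := heq
        push_neg at h1 h2
        have hs1 : sb hT r b ≤ i + k := le_trans h1 (Nat.add_le_add_right (hdivle i) k)
        have hs2 : sb hT r b' ≤ i' + k := le_trans h2 (Nat.add_le_add_right (hdivle i') k)
        have e1 : min (sb hT r b - 1 - i) (k-1) = sb hT r b - 1 - i := by omega
        have e2 : min (sb hT r b' - 1 - i') (k-1) = sb hT r b' - 1 - i' := by omega
        rw [e1, e2, hbeq] at hmineq
        rw [hbeq] at hi hs1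
        have : i = i' := by omega
        rw [hrep.2.2, hrep'.2.2, hbeq, this]
    have hcard := Finset.card_le_card_of_injOn f hmaps hinj
    rw [Finset.card_erase_of_mem (Finset.mem_univ r), Finset.card_univ,
      Finset.card_disjSum, Finset.card_product, Finset.card_product,
      Finset.card_univ, Finset.card_univ, Fintype.card_fin, Fintype.card_fin] at hcard
    -- hcard : Fintype.card V - 1 ≤ StF.card * (k+1) + BF.card * k
    have hBF2 : BF ⊆ (univ.filter fun v => T.degree v = 1) ∪
        (univ.filter fun v => 3 ≤ T.degree v) := by
      intro b hb
      rw [hBFdef, Finset.mem_filter] at hb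
      rw [Finset.mem_union, Finset.mem_filter, Finset.mem_filter]
      have := deg_pos hT hcardV b
      have hb2 := hb.2.2
      rcases Nat.lt_or_ge (T.degree b) 3 with h | h
      · exact Or.inl ⟨Finset.mem_univ _, by omega⟩
      · exact Or.inr ⟨Finset.mem_univ _, h⟩
    have hBFle : BF.card ≤ L + (univ.filter fun v => 3 ≤ T.degree v).card := by
      calc BF.card ≤ _ := Finset.card_le_card hBF2
        _ ≤ _ := Finset.card_union_le _ _
        _ = _ := by rw [hLdef]
    have hlb := leaf_branch_bound hT hcardV
    have hBc : BF.card + 2 ≤ 2 * L := by omega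
    have hNat : n ≤ m * (k+1) + BF.card * k + 1 := by
      rw [hm]; omega
    -- rational arithmetic
    have q1 : (n:ℚ) ≤ (m:ℚ) * ((k:ℚ)+1) + (BF.card:ℚ) * k + 1 := by exact_mod_cast hNat
    have q2 : ((BF.card:ℚ)) + 2 ≤ 2 * (L:ℚ) := by exact_mod_cast hBc
    have hkq : (3:ℚ) ≤ (k:ℚ) := by exact_mod_cast (show 3 ≤ k from hk)
    have hk0 : (0:ℚ) < k := by linarith
    have hnq : (2:ℚ) ≤ (n:ℚ) := by exact_mod_cast hn2
    rw [lt_div_iff₀ (by positivity)] at hLcase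
    rw [div_le_iff₀ (by positivity)]
    have s1 : (BF.card:ℚ) * k ≤ (2*(L:ℚ) - 2) * k :=
      mul_le_mul_of_nonneg_right (by linarith) (le_of_lt hk0)
    have s2 : (2*(L:ℚ) - 2) * k < (n:ℚ)/2 - 2*k := by nlinarith
    have s3 : (m:ℚ) * ((k:ℚ)+1) > (n:ℚ)/2 + 2*k - 1 := by linarith
    have hm0 : (0:ℚ) ≤ (m:ℚ) := Nat.cast_nonneg m
    nlinarith [mul_le_mul_of_nonneg_right (le_of_lt s3) (le_of_lt hk0),
      mul_nonneg (by linarith : (0:ℚ) ≤ (n:ℚ)) (by linarith : (0:ℚ) ≤ (k:ℚ)),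
      sq_nonneg ((k:ℚ))]
  · intro i a b hab
    dsimp only at hab
    obtain ⟨bb, iv, hrep, hdvd, hik⟩ := hstart i
    have ra := hPrep _ _ _ hrep hik a (Fin.is_le a)
    have rb := hPrep _ _ _ hrep hik b (Fin.is_le b)
    have da := rep_dist hT ra
    have db := rep_dist hT rb
    rw [hab] at da
    exact Fin.ext (by omega)
  · intro i j
    dsimp only
    obtain ⟨bb, iv, hrep, hdvd, hik⟩ := hstart i
    have hj : (j : ℕ) ≤ k := le_of_lt j.isLt
    have rx := hPrep _ _ _ hrep hik (j : ℕ) hj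
    have hxr : (par hT r)^[(j:ℕ)] ((e.symm i : StF) : V) ≠ r := rep_ne_root hT rx
    have hadj := par_adj hT r hxr
    simp only [Fin.coe_castSucc, Fin.val_succ]
    rw [Function.iterate_succ_apply']
    exact hadj
  · intro i j hj0 hjl
    dsimp only
    obtain ⟨bb, iv, hrep, hdvd, hik⟩ := hstart i
    have h1 : 1 ≤ (j:ℕ) := by
      rcases Nat.eq_zero_or_pos (j:ℕ) with h | h
      · exact absurd (Fin.ext (by simp [h]) : j = 0) hj0
      · exact h
    have h2 : (j:ℕ) < k := by
      rcases Nat.lt_or_ge (j:ℕ) k with h | h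
      · exact h
      · exfalso
        have : (j:ℕ) = k := by have := j.isLt; omega
        exact hjl (Fin.ext (by simp [this, Fin.val_last]))
    have rx := hPrep _ _ _ hrep hik (j:ℕ) (by omega)
    exact rep_interior_deg hT rx (by omega)
  · intro i j hij a b heq
    dsimp only at heq
    obtain ⟨bi, ivi, hrepi, hdvdi, hiki⟩ := hstart i
    obtain ⟨bj, ivj, hrepj, hdvdj, hikj⟩ := hstart j
    have ra := hPrep _ _ _ hrepi hiki (a:ℕ) (Fin.is_le a)
    have rb := hPrep _ _ _ hrepj hikj (b:ℕ) (Fin.is_le b)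
    rw [heq] at ra
    obtain ⟨hbeq, hieq⟩ := rep_unique hT r _ _ _ _ _ ra rb
    obtain ⟨q, hq⟩ := hdvdi
    obtain ⟨q', hq'⟩ := hdvdj
    have hqq : q = q' := by
      rcases Nat.lt_trichotomy q q' with h | h | h
      · exfalso
        have hmul : (k+1) * (q+1) ≤ (k+1) * q' := Nat.mul_le_mul_left _ h
        rw [Nat.mul_succ] at hmul
        have ha := Fin.is_le a
        have hb := Fin.is_le b
        rw [hq, hq'] at hieq
        linarith
      · exact h
      · exfalso
        have hmul : (k+1) * (q'+1) ≤ (k+1) * q := Nat.mul_le_mul_left _ h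
        rw [Nat.mul_succ] at hmul
        have ha := Fin.is_le a
        have hb := Fin.is_le b
        rw [hq, hq'] at hieq
        linarith
    have hiv : ivi = ivj := by rw [hq, hq', hqq]
    have hvv : ((e.symm i : StF) : V) = ((e.symm j : StF) : V) := by
      rw [hrepi.2.2, hrepj.2.2, hbeq, hiv]
    exact hij (e.symm.injective (Subtype.ext hvv))
end

section
/- Let G be a graph containing a path P = p_1, …, p_m and two vertices v, w not on P. Suppose there exist indices i < j with 1 < i, j < m such that: p_{i-1} and p_{i+1} are adjacent to v, p_i is adjacent to p_1, p_{j-1} and p_{j+1} are adjacent to w, p_j is adjacent to p_m, and p_i is adjacent to p_j. Then G contains a cycle on the vertex set V(P) ∪ {v, w}, namely p_i, p_1, …, p_{i-1}, v, p_{i+1}, …, p_{j-1}, w, p_{j+1}, …, p_m, p_j, p_i. -/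
set_option maxHeartbeats 4000000

private def ppExt {V : Type} (p : ℕ → V) (m : ℕ) (v w : V) (k : ℕ) : V :=
  if k = m then v else if k = m + 1 then w else p k

private lemma ppExt_lt {V : Type} (p : ℕ → V) (m : ℕ) (v w : V) {k : ℕ} (h : k < m) :
    ppExt p m v w k = p k := by
  unfold ppExt; rw [if_neg (by omega), if_neg (by omega)]

private lemma ppExt_m {V : Type} (p : ℕ → V) (m : ℕ) (v w : V) :
    ppExt p m v w m = v := by simp [ppExt]

private lemma ppExt_m1 {V : Type} (p : ℕ → V) (m : ℕ) (v w : V) :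
    ppExt p m v w (m + 1) = w := by
  unfold ppExt; rw [if_neg (by omega), if_pos rfl]

private lemma key {V : Type} (G : SimpleGraph V) (n : ℕ) (p' : ℕ → V)
    (hinj' : ∀ a < n, ∀ b < n, p' a = p' b → a = b)
    (f : ℕ → ℕ)
    (hfinj : ∀ a < n, ∀ b < n, f a = f b → a = b)
    (hfmaps : ∀ a < n, f a < n)
    (hadj : ∀ t, t + 1 < n → G.Adj (p' (f t)) (p' (f (t + 1))))
    (hclose : G.Adj (p' (f (n - 1))) (p' (f 0))) (hn : 1 ≤ n) :
    ∃ q : ℕ → V, (∀ a < n, ∀ b < n, q a = q b → a = b) ∧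
      (∀ t, t + 1 < n → G.Adj (q t) (q (t + 1))) ∧
      G.Adj (q (n - 1)) (q 0) ∧
      q '' Set.Iio n = p' '' Set.Iio n := by
  refine ⟨fun k => p' (f k), ?_, hadj, hclose, ?_⟩
  · intro a ha b hb h
    exact hfinj a ha b hb (hinj' _ (hfmaps a ha) _ (hfmaps b hb) h)
  · have hmaps : Set.MapsTo f (Set.Iio n) (Set.Iio n) := fun a ha => hfmaps a ha
    have hbij : Set.BijOn f (Set.Iio n) (Set.Iio n) := by
      rw [← Set.Finite.injOn_iff_bijOn_of_mapsTo (Set.finite_Iio n) hmaps]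
      intro a ha b hb h; exact hfinj a ha b hb h
    have himg : f '' Set.Iio n = Set.Iio n := hbij.image_eq
    calc (fun k => p' (f k)) '' Set.Iio n = p' '' (f '' Set.Iio n) := by
          rw [Set.image_image]
      _ = p' '' Set.Iio n := by rw [himg]


private def cyc1 (i j m k : ℕ) : ℕ :=
  if k = 0 then i
  else if k ≤ i then k - 1
  else if k = i + 1 then m
  else if k ≤ j then k - 1
  else if k = j + 1 then m + 1
  else if k ≤ m then k - 1
  else j

private def cyc2 (i m k : ℕ) : ℕ :=
  if k < i then k
  else if k = i then m
  else if k = i + 1 then i + 1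
  else if k < m then m + i + 1 - k
  else if k = m then m + 1
  else i

/-- Closing the Hamilton cycle: given a path `P = p 0, …, p (m-1)` in `G`, two vertices
`v, w` off the path, and internal indices `i < j` with `p (i-1), p (i+1)` adjacent to `v`,
`p i` adjacent to `p 0`, `p (j-1), p (j+1)` adjacent to `w`, `p j` adjacent to `p (m-1)`,
and `p i` adjacent to `p j`, the graph `G` contains a cycle on `V(P) ∪ {v, w}`. -/
theorem stmt2 {V : Type} (G : SimpleGraph V) (m : ℕ) (hm : 6 ≤ m)
    (p : ℕ → V)
    (hinj : ∀ a < m, ∀ b < m, p a = p b → a = b)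
    (hpath : ∀ i, i + 1 < m → G.Adj (p i) (p (i + 1)))
    (v w : V) (hvw : v ≠ w)
    (hv : v ∉ p '' Set.Iio m) (hw : w ∉ p '' Set.Iio m)
    (i j : ℕ) (hi : 1 ≤ i) (hij : i < j) (hj : j + 1 < m)
    (hv1 : G.Adj (p (i - 1)) v) (hv2 : G.Adj (p (i + 1)) v)
    (hi1 : G.Adj (p i) (p 0))
    (hw1 : G.Adj (p (j - 1)) w) (hw2 : G.Adj (p (j + 1)) w)
    (hjm : G.Adj (p j) (p (m - 1)))
    (hijadj : G.Adj (p i) (p j)) :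
    ∃ q : ℕ → V, (∀ a < m + 2, ∀ b < m + 2, q a = q b → a = b) ∧
      (∀ t, t + 1 < m + 2 → G.Adj (q t) (q (t + 1))) ∧
      G.Adj (q (m + 1)) (q 0) ∧
      q '' Set.Iio (m + 2) = insert v (insert w (p '' Set.Iio m)) := by
  set p' := ppExt p m v w with hp'
  -- injectivity of p' on Iio (m+2)
  have hinj' : ∀ a < m + 2, ∀ b < m + 2, p' a = p' b → a = b := by
    intro a ha b hb h
    rcases Nat.lt_or_ge a m with ha' | ha' <;> rcases Nat.lt_or_ge b m with hb' | hb'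
    · exact hinj a ha' b hb' (by rwa [hp', ppExt_lt p m v w ha', ppExt_lt p m v w hb'] at h)
    · exfalso
      rw [hp', ppExt_lt p m v w ha'] at h
      rcases Nat.eq_or_lt_of_le hb' with hb'' | hb''
      · rw [← hb'', ppExt_m] at h; exact hv ⟨a, ha', h⟩
      · have : b = m + 1 := by omega
        rw [this, ppExt_m1] at h; exact hw ⟨a, ha', h⟩
    · exfalso
      rw [hp', ppExt_lt p m v w hb'] at h
      rcases Nat.eq_or_lt_of_le ha' with ha'' | ha''
      · rw [← ha'', ppExt_m] at h; exact hv ⟨b, hb', h.symm⟩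
      · have : a = m + 1 := by omega
        rw [this, ppExt_m1] at h; exact hw ⟨b, hb', h.symm⟩
    · rcases Nat.eq_or_lt_of_le ha' with ha'' | ha'' <;>
        rcases Nat.eq_or_lt_of_le hb' with hb'' | hb''
      · omega
      · exfalso
        have hb3 : b = m + 1 := by omega
        rw [← ha'', hb3, hp', ppExt_m, ppExt_m1] at h; exact hvw h
      · exfalso
        have ha3 : a = m + 1 := by omega
        rw [← hb'', ha3, hp', ppExt_m, ppExt_m1] at h; exact hvw h.symm
      · omega
  have himg : p' '' Set.Iio (m + 2) = insert v (insert w (p '' Set.Iio m)) := by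
    ext x
    simp only [Set.mem_image, Set.mem_insert_iff, Set.mem_Iio]
    constructor
    · rintro ⟨a, ha, rfl⟩
      rcases Nat.lt_or_ge a m with ha' | ha'
      · exact Or.inr (Or.inr ⟨a, ha', (ppExt_lt p m v w ha').symm⟩)
      · rcases Nat.eq_or_lt_of_le ha' with ha'' | ha''
        · left; rw [← ha'', hp', ppExt_m]
        · right; left
          have : a = m + 1 := by omega
          rw [this, hp', ppExt_m1]
    · rintro (h | h | ⟨a, ha, h⟩)
      · exact ⟨m, by omega, by rw [hp', ppExt_m, h]⟩
      · exact ⟨m + 1, by omega, by rw [hp', ppExt_m1, h]⟩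
      · exact ⟨a, by omega, by rw [hp', ppExt_lt p m v w ha, h]⟩
  rcases Nat.lt_or_ge (i + 1) j with hcase | hcase
  · -- general case: i + 2 ≤ j
    have hadj1 : ∀ t, t + 1 < m + 2 →
        G.Adj (p' (cyc1 i j m t)) (p' (cyc1 i j m (t + 1))) := by
      intro t ht
      by_cases e0 : t = 0
      · have g1 : cyc1 i j m t = i := by unfold cyc1; split_ifs <;> first | contradiction | omega
        have g2 : cyc1 i j m (t + 1) = 0 := by unfold cyc1; split_ifs <;> first | contradiction | omega
        rw [g1, g2, hp', ppExt_lt p m v w (by omega), ppExt_lt p m v w (by omega)]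
        exact hi1
      by_cases e1 : t < i
      · have g1 : cyc1 i j m t = t - 1 := by unfold cyc1; split_ifs <;> first | contradiction | omega
        have g2 : cyc1 i j m (t + 1) = t := by unfold cyc1; split_ifs <;> first | contradiction | omega
        rw [g1, g2, hp', ppExt_lt p m v w (by omega), ppExt_lt p m v w (by omega)]
        have := hpath (t - 1) (by omega)
        rwa [show t - 1 + 1 = t by omega] at this
      by_cases e2 : t = i
      · have g1 : cyc1 i j m t = i - 1 := by unfold cyc1; split_ifs <;> first | contradiction | omega
        have g2 : cyc1 i j m (t + 1) = m := by unfold cyc1; split_ifs <;> first | contradiction | omega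
        rw [g1, g2, hp', ppExt_lt p m v w (by omega), ppExt_m]
        exact hv1
      by_cases e3 : t = i + 1
      · have g1 : cyc1 i j m t = m := by unfold cyc1; split_ifs <;> first | contradiction | omega
        have g2 : cyc1 i j m (t + 1) = i + 1 := by unfold cyc1; split_ifs <;> first | contradiction | omega
        rw [g1, g2, hp', ppExt_m, ppExt_lt p m v w (by omega)]
        exact hv2.symm
      by_cases e4 : t < j
      · have g1 : cyc1 i j m t = t - 1 := by unfold cyc1; split_ifs <;> first | contradiction | omega
        have g2 : cyc1 i j m (t + 1) = t := by unfold cyc1; split_ifs <;> first | contradiction | omega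
        rw [g1, g2, hp', ppExt_lt p m v w (by omega), ppExt_lt p m v w (by omega)]
        have := hpath (t - 1) (by omega)
        rwa [show t - 1 + 1 = t by omega] at this
      by_cases e5 : t = j
      · have g1 : cyc1 i j m t = j - 1 := by unfold cyc1; split_ifs <;> first | contradiction | omega
        have g2 : cyc1 i j m (t + 1) = m + 1 := by unfold cyc1; split_ifs <;> first | contradiction | omega
        rw [g1, g2, hp', ppExt_lt p m v w (by omega), ppExt_m1]
        exact hw1
      by_cases e6 : t = j + 1
      · have g1 : cyc1 i j m t = m + 1 := by unfold cyc1; split_ifs <;> first | contradiction | omega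
        have g2 : cyc1 i j m (t + 1) = j + 1 := by unfold cyc1; split_ifs <;> first | contradiction | omega
        rw [g1, g2, hp', ppExt_m1, ppExt_lt p m v w (by omega)]
        exact hw2.symm
      by_cases e7 : t < m
      · have g1 : cyc1 i j m t = t - 1 := by unfold cyc1; split_ifs <;> first | contradiction | omega
        have g2 : cyc1 i j m (t + 1) = t := by unfold cyc1; split_ifs <;> first | contradiction | omega
        rw [g1, g2, hp', ppExt_lt p m v w (by omega), ppExt_lt p m v w (by omega)]
        have := hpath (t - 1) (by omega)
        rwa [show t - 1 + 1 = t by omega] at this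
      · have g1 : cyc1 i j m t = m - 1 := by unfold cyc1; split_ifs <;> first | contradiction | omega
        have g2 : cyc1 i j m (t + 1) = j := by unfold cyc1; split_ifs <;> first | contradiction | omega
        rw [g1, g2, hp', ppExt_lt p m v w (by omega), ppExt_lt p m v w (by omega)]
        exact hjm.symm
    have hclose1 : G.Adj (p' (cyc1 i j m (m + 2 - 1))) (p' (cyc1 i j m 0)) := by
      have g1 : cyc1 i j m (m + 2 - 1) = j := by
        rw [show m + 2 - 1 = m + 1 by omega]; unfold cyc1; split_ifs <;> first | contradiction | omega
      have g2 : cyc1 i j m 0 = i := by unfold cyc1; split_ifs <;> first | contradiction | omega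
      rw [g1, g2, hp', ppExt_lt p m v w (by omega), ppExt_lt p m v w (by omega)]
      exact hijadj.symm
    obtain ⟨q, h1, h2, h3, h4⟩ := key G (m + 2) p' hinj' (cyc1 i j m)
      (by intro a ha b hb h; unfold cyc1 at h; split_ifs at h <;> first | contradiction | omega)
      (by intro a ha; unfold cyc1; split_ifs <;> first | contradiction | omega)
      hadj1 hclose1 (by omega)
    exact ⟨q, h1, h2, h3, by rw [h4, himg]⟩
  · -- special case: j = i + 1
    have hj2 : j = i + 1 := by omega
    subst hj2
    have hadj2 : ∀ t, t + 1 < m + 2 →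
        G.Adj (p' (cyc2 i m t)) (p' (cyc2 i m (t + 1))) := by
      intro t ht
      by_cases e1 : t + 1 < i
      · have g1 : cyc2 i m t = t := by unfold cyc2; split_ifs <;> first | contradiction | omega
        have g2 : cyc2 i m (t + 1) = t + 1 := by unfold cyc2; split_ifs <;> first | contradiction | omega
        rw [g1, g2, hp', ppExt_lt p m v w (by omega), ppExt_lt p m v w (by omega)]
        exact hpath t (by omega)
      by_cases e2 : t + 1 = i
      · have g1 : cyc2 i m t = i - 1 := by unfold cyc2; split_ifs <;> first | contradiction | omega
        have g2 : cyc2 i m (t + 1) = m := by unfold cyc2; split_ifs <;> first | contradiction | omega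
        rw [g1, g2, hp', ppExt_lt p m v w (by omega), ppExt_m]
        exact hv1
      by_cases e3 : t = i
      · have g1 : cyc2 i m t = m := by unfold cyc2; split_ifs <;> first | contradiction | omega
        have g2 : cyc2 i m (t + 1) = i + 1 := by unfold cyc2; split_ifs <;> first | contradiction | omega
        rw [g1, g2, hp', ppExt_m, ppExt_lt p m v w (by omega)]
        exact hv2.symm
      by_cases e4 : t = i + 1
      · have g1 : cyc2 i m t = i + 1 := by unfold cyc2; split_ifs <;> first | contradiction | omega
        have g2 : cyc2 i m (t + 1) = m - 1 := by unfold cyc2; split_ifs <;> first | contradiction | omega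
        rw [g1, g2, hp', ppExt_lt p m v w (by omega), ppExt_lt p m v w (by omega)]
        exact hjm
      by_cases e5 : t + 1 < m
      · have g1 : cyc2 i m t = m + i + 1 - t := by unfold cyc2; split_ifs <;> first | contradiction | omega
        have g2 : cyc2 i m (t + 1) = m + i - t := by unfold cyc2; split_ifs <;> first | contradiction | omega
        rw [g1, g2, hp', ppExt_lt p m v w (by omega), ppExt_lt p m v w (by omega)]
        have := hpath (m + i - t) (by omega)
        rw [show m + i - t + 1 = m + i + 1 - t by omega] at this
        exact this.symm
      by_cases e6 : t + 1 = m
      · have g1 : cyc2 i m t = i + 1 + 1 := by unfold cyc2; split_ifs <;> first | contradiction | omega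
        have g2 : cyc2 i m (t + 1) = m + 1 := by unfold cyc2; split_ifs <;> first | contradiction | omega
        rw [g1, g2, hp', ppExt_lt p m v w (by omega), ppExt_m1]
        exact hw2
      · have g1 : cyc2 i m t = m + 1 := by unfold cyc2; split_ifs <;> first | contradiction | omega
        have g2 : cyc2 i m (t + 1) = i + 1 - 1 := by unfold cyc2; split_ifs <;> first | contradiction | omega
        rw [g1, g2, hp', ppExt_m1, ppExt_lt p m v w (by omega)]
        exact hw1.symm
    have hclose2 : G.Adj (p' (cyc2 i m (m + 2 - 1))) (p' (cyc2 i m 0)) := by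
      have g1 : cyc2 i m (m + 2 - 1) = i := by
        rw [show m + 2 - 1 = m + 1 by omega]; unfold cyc2; split_ifs <;> first | contradiction | omega
      have g2 : cyc2 i m 0 = 0 := by unfold cyc2; split_ifs <;> first | contradiction | omega
      rw [g1, g2, hp', ppExt_lt p m v w (by omega), ppExt_lt p m v w (by omega)]
      exact hi1
    obtain ⟨q, h1, h2, h3, h4⟩ := key G (m + 2) p' hinj' (cyc2 i m)
      (by intro a ha b hb h; unfold cyc2 at h; split_ifs at h <;> first | contradiction | omega)
      (by intro a ha; unfold cyc2; split_ifs <;> first | contradiction | omega)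
      hadj2 hclose2 (by omega)
    exact ⟨q, h1, h2, h3, by rw [h4, himg]⟩
end

section
/- Let T be a tree on n vertices and let T' be a subtree of T on n' < n vertices obtained from T by repeatedly deleting leaves. Let S be the set of vertices of T' that are not adjacent in T to any vertex outside T' and form an independent set in T'. If T has maximum degree at most Δ, then one can choose such a set S with |S| ≥ (n' − Δ(n − n'))/(Δ+1), and in particular if n − n' ≤ εn and n' ≥ (1−ε)n then |S| ≥ (1 − (Δ+1)ε)n/(Δ+1). -/
lemma greedy_indep {V : Type} [Fintype V] [DecidableEq V] (T : SimpleGraph V)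
    [DecidableRel T.Adj] (Δ : ℕ) (hdeg : ∀ v, T.degree v ≤ Δ) (A : Finset V) :
    ∃ S : Finset V, S ⊆ A ∧ (∀ u ∈ S, ∀ v ∈ S, ¬ T.Adj u v) ∧
      A.card ≤ (Δ + 1) * S.card := by
  induction A using Finset.strongInduction with
  | _ A ih =>
    rcases A.eq_empty_or_nonempty with rfl | ⟨v, hv⟩
    · exact ⟨∅, by simp, by simp, by simp⟩
    · set X := insert v (T.neighborFinset v) with hX
      have hvX : v ∈ X := Finset.mem_insert_self _ _
      have hss : A \ X ⊂ A := by
        refine Finset.ssubset_iff_of_subset (Finset.sdiff_subset) |>.mpr ?_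
        exact ⟨v, hv, by simp [hvX]⟩
      obtain ⟨S, hS, hind, hcard⟩ := ih (A \ X) hss
      have hvS : v ∉ S := fun h => by
        have := hS h; simp [hvX] at this
      have hnotadj : ∀ s ∈ S, ¬ T.Adj v s := by
        intro s hs hadj
        have := hS hs
        simp only [Finset.mem_sdiff, hX, Finset.mem_insert,
          SimpleGraph.mem_neighborFinset] at this
        exact this.2 (Or.inr hadj)
      refine ⟨insert v S, ?_, ?_, ?_⟩
      · intro x hx
        rcases Finset.mem_insert.mp hx with rfl | hx
        · exact hv
        · exact (Finset.mem_sdiff.mp (hS hx)).1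
      · intro u hu w hw h
        rcases Finset.mem_insert.mp hu with hu | hu
        · rcases Finset.mem_insert.mp hw with hw | hw
          · exact T.loopless.irrefl _ (hu ▸ hw ▸ h)
          · exact hnotadj _ hw (hu ▸ h)
        · rcases Finset.mem_insert.mp hw with hw | hw
          · exact hnotadj _ hu (hw ▸ h).symm
          · exact hind _ hu _ hw h
      · have h1 : A.card ≤ (A \ X).card + X.card :=
          Finset.card_le_card_sdiff_add_card
        have h2 : X.card ≤ Δ + 1 := by
          calc X.card ≤ (T.neighborFinset v).card + 1 := Finset.card_insert_le _ _
            _ ≤ Δ + 1 := by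
              have := hdeg v
              rw [SimpleGraph.card_neighborFinset_eq_degree]
              omega
        have h3 : (insert v S).card = S.card + 1 := Finset.card_insert_of_notMem hvS
        calc A.card ≤ (Δ + 1) * S.card + (Δ + 1) := by omega
          _ = (Δ + 1) * (insert v S).card := by rw [h3]; ring

/-- In a tree `T` of maximum degree at most `Δ` on `n` vertices, given a subtree `T'`
on a vertex set `W` of size `n' < n`, there is a set `S ⊆ W`, independent in `T`, with
no `T`-neighbours outside `W`, of size at least `(n' − Δ(n − n'))/(Δ+1)`; in particular,
if `n − n' ≤ εn` and `n' ≥ (1−ε)n` then `|S| ≥ (1 − (Δ+1)ε)n/(Δ+1)`. -/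
theorem stmt5 {V : Type} [Fintype V] [DecidableEq V] (T : SimpleGraph V)
    [DecidableRel T.Adj] (hT : T.IsTree) (Δ : ℕ) (hΔ : 2 ≤ Δ)
    (hdeg : ∀ v, T.degree v ≤ Δ)
    (n n' : ℕ) (hn : Fintype.card V = n)
    (W : Finset V) (hW : W.card = n') (hn' : n' < n)
    (hWtree : (T.induce (W : Set V)).IsTree) :
    ∃ S : Finset V, S ⊆ W ∧
      (∀ u ∈ S, ∀ v ∈ S, ¬ T.Adj u v) ∧
      (∀ u ∈ S, ∀ v : V, T.Adj u v → v ∈ W) ∧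
      ((n' : ℚ) - Δ * ((n : ℚ) - n')) / (Δ + 1) ≤ S.card ∧
      (∀ ε : ℚ, (n : ℚ) - n' ≤ ε * n → (1 - ε) * n ≤ n' →
        (1 - (Δ + 1) * ε) * n / (Δ + 1) ≤ S.card) := by
  classical
  -- boundary vertices
  set B : Finset V := W.filter (fun w => ∃ v ∉ W, T.Adj w v) with hB
  have hBsub : B ⊆ Wᶜ.biUnion (fun v => T.neighborFinset v) := by
    intro w hw
    simp only [hB, Finset.mem_filter] at hw
    obtain ⟨hwW, v, hv, hadj⟩ := hw
    exact Finset.mem_biUnion.mpr ⟨v, Finset.mem_compl.mpr hv,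
      (SimpleGraph.mem_neighborFinset _ _ _).mpr hadj.symm⟩
  have hBcard : B.card ≤ Δ * (n - n') := by
    calc B.card ≤ (Wᶜ.biUnion (fun v => T.neighborFinset v)).card :=
          Finset.card_le_card hBsub
      _ ≤ ∑ v ∈ Wᶜ, (T.neighborFinset v).card := Finset.card_biUnion_le
      _ ≤ ∑ v ∈ Wᶜ, Δ := Finset.sum_le_sum (fun v _ => by
            rw [SimpleGraph.card_neighborFinset_eq_degree]; exact hdeg v)
      _ = Wᶜ.card * Δ := by rw [Finset.sum_const, smul_eq_mul]
      _ = (n - n') * Δ := by rw [Finset.card_compl, hW, hn]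
      _ = Δ * (n - n') := Nat.mul_comm _ _
  -- apply greedy to W \ B
  obtain ⟨S, hS, hind, hcard⟩ := greedy_indep T Δ hdeg (W \ B)
  have hSW : S ⊆ W := hS.trans Finset.sdiff_subset
  have hSnb : ∀ u ∈ S, ∀ v : V, T.Adj u v → v ∈ W := by
    intro u hu v hadj
    by_contra hv
    have : u ∈ B := Finset.mem_filter.mpr ⟨hSW hu, v, hv, hadj⟩
    exact (Finset.mem_sdiff.mp (hS hu)).2 this
  -- main cardinality bound
  have hWB : (W \ B).card = W.card - B.card := Finset.card_sdiff_of_subset (Finset.filter_subset _ _)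
  have hBW : B.card ≤ W.card := Finset.card_le_card (Finset.filter_subset _ _)
  have key : ((n' : ℚ) - Δ * ((n : ℚ) - n')) / (Δ + 1) ≤ S.card := by
    rw [div_le_iff₀ (by positivity)]
    have h1 : ((W \ B).card : ℚ) ≤ (Δ + 1) * S.card := by
      have := hcard; exact_mod_cast by exact_mod_cast Nat.cast_le.mpr this
    have h2 : (n' : ℚ) - Δ * ((n : ℚ) - n') ≤ (W \ B).card := by
      have hBq : (B.card : ℚ) ≤ Δ * ((n : ℚ) - n') := by
        have : ((Δ * (n - n') : ℕ) : ℚ) = Δ * ((n : ℚ) - n') := by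
          push_cast [Nat.cast_sub hn'.le]; ring
        rw [← this]; exact_mod_cast hBcard
      have : ((W \ B).card : ℚ) = (n' : ℚ) - B.card := by
        rw [hWB, Nat.cast_sub hBW, hW]
      rw [this]; linarith
    calc (n' : ℚ) - Δ * ((n : ℚ) - n') ≤ (Δ + 1) * S.card := by linarith
      _ = S.card * (Δ + 1) := by ring
  refine ⟨S, hSW, hind, hSnb, key, ?_⟩
  intro ε h1 h2
  have hmain : (1 - (Δ + 1) * ε) * n ≤ (n' : ℚ) - Δ * ((n : ℚ) - n') := by
    have hΔ0 : (0 : ℚ) ≤ Δ := Nat.cast_nonneg _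
    nlinarith [h1, h2]
  calc (1 - (Δ + 1) * ε) * n / (Δ + 1) ≤ ((n' : ℚ) - Δ * ((n : ℚ) - n')) / (Δ + 1) := by
        apply div_le_div_of_nonneg_right hmain (by positivity) |>.trans_eq rfl
    _ ≤ S.card := key
end

section
/- For every α ∈ (0,1) with αn an integer, the complete bipartite graph K_{αn,(1−α)n} has minimum degree αn, and if after adding any graph H on the same vertex set the (1−α)n-side contains more than αn vertices that are isolated in H, then the union K_{αn,(1−α)n} ∪ H has no perfect matching. -/
open scoped Classical

/-- The complete bipartite graph `K_{αn,(1−α)n}` (with parts `A` and `Aᶜ`, `|A| = a = αn`,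
`α ≤ 1/2`) has minimum degree `αn`; and for any graph `H` on the same vertex set, if more
than `αn` vertices of the `(1−α)n`-side are isolated in `H`, then `K_{αn,(1−α)n} ∪ H`
has no perfect matching. -/
theorem stmt7 {V : Type} [Fintype V] [DecidableEq V]
    (n a : ℕ) (hn : Fintype.card V = n) (hne : Even n)
    (α : ℝ) (hα0 : 0 < α) (hα1 : α ≤ 1 / 2) (ha : (a : ℝ) = α * n)
    (A : Finset V) (hA : A.card = a) :
    (∀ v : V, a ≤ (Finset.univ.filter fun u =>
        (SimpleGraph.fromRel fun x y => x ∈ A ∧ y ∉ A).Adj v u).card) ∧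
    (∀ H : SimpleGraph V,
      a < (Finset.univ.filter fun v => v ∉ A ∧ ∀ u, ¬ H.Adj v u).card →
      ¬ ∃ M : ((SimpleGraph.fromRel fun x y => x ∈ A ∧ y ∉ A) ⊔ H).Subgraph,
          M.IsPerfectMatching) := by
  have h2a : 2 * a ≤ n := by
    have h : (2 * a : ℝ) ≤ (n : ℝ) := by
      rw [ha]
      nlinarith [(Nat.cast_nonneg n : (0:ℝ) ≤ n)]
    exact_mod_cast h
  constructor
  · intro v
    by_cases hv : v ∈ A
    · have heq : (Finset.univ.filter fun u =>
          (SimpleGraph.fromRel fun x y => x ∈ A ∧ y ∉ A).Adj v u) = Aᶜ := by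
        ext u
        simp only [Finset.mem_filter, Finset.mem_univ, true_and, Finset.mem_compl,
          SimpleGraph.fromRel_adj]
        constructor
        · rintro ⟨hne', h | h⟩
          · exact h.2
          · exact absurd hv h.2
        · intro hu
          exact ⟨fun h => hu (h ▸ hv), Or.inl ⟨hv, hu⟩⟩
      rw [heq, Finset.card_compl, hA, hn]
      omega
    · have heq : (Finset.univ.filter fun u =>
          (SimpleGraph.fromRel fun x y => x ∈ A ∧ y ∉ A).Adj v u) = A := by
        ext u
        simp only [Finset.mem_filter, Finset.mem_univ, true_and,
          SimpleGraph.fromRel_adj]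
        constructor
        · rintro ⟨hne', h | h⟩
          · exact absurd h.1 hv
          · exact h.1
        · intro hu
          exact ⟨fun h => hv (h ▸ hu), Or.inr ⟨hu, hv⟩⟩
      rw [heq, hA]
  · rintro H hcard ⟨M, hM⟩
    set S := Finset.univ.filter fun v => v ∉ A ∧ ∀ u, ¬ H.Adj v u with hS
    have key : ∀ v ∈ S, ∃ w, w ∈ A ∧ M.Adj v w := by
      intro v hv
      rw [hS, Finset.mem_filter] at hv
      obtain ⟨w, hw, -⟩ := hM.1 (hM.2 v)
      have hadj := M.adj_sub hw
      rw [SimpleGraph.sup_adj] at hadj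
      rcases hadj with hg | hh
      · rw [SimpleGraph.fromRel_adj] at hg
        refine ⟨w, ?_, hw⟩
        rcases hg.2 with ⟨hvA, -⟩ | ⟨hwA, -⟩
        · exact absurd hvA hv.2.1
        · exact hwA
      · exact absurd hh (hv.2.2 w)
    choose f hfA hfM using key
    have hle : S.card ≤ A.card := by
      apply Finset.card_le_card_of_injOn (fun v => if h : v ∈ S then f v h else v)
      · intro v hv
        simp only [dif_pos (Finset.mem_coe.mp hv)]
        exact hfA v hv
      · intro v₁ hv₁ v₂ hv₂ heq
        simp only [Finset.mem_coe] at hv₁ hv₂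
        simp only [dif_pos hv₁, dif_pos hv₂] at heq
        have h1 : M.Adj (f v₁ hv₁) v₁ := (hfM v₁ hv₁).symm
        have h2 : M.Adj (f v₁ hv₁) v₂ := heq ▸ (hfM v₂ hv₂).symm
        obtain ⟨u, -, huniq⟩ := hM.1 (hM.2 (f v₁ hv₁))
        rw [huniq v₁ h1, huniq v₂ h2]
    rw [hA] at hle
    omega
end

section
/- Let G be a graph on n vertices, let V' = {v_1, …, v_k} be a set of vertices, and let P be a path in G on the remaining n − k vertices. Suppose that for every pair of vertices (u, v) of G there is a set B(u,v) of 'switching' vertices of size at least b, where each x ∈ B(u,v) lies on P at even position (with disjoint path-neighbourhoods for distinct elements), x is adjacent to u, and both path-neighbours of x are adjacent to v. If k ≤ b, then G contains a path on at least n − 2 vertices; more precisely, iterating the switching step k − 2 times, each step consuming at most one element from each set B(u,v), yields a path covering all vertices except v_{k-1} and v_k. -/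
/-- Correctness of the greedy absorption algorithm: if `G` has a path on the `n − k`
vertices outside `V'` and every pair `(u,v)` has a switching set `B(u,v)` of size at
least `b ≥ k` consisting of path vertices at even positions (hence with disjoint
path-neighbourhoods) adjacent to `u` and whose path-neighbours are adjacent to `v`,
then `G` has a path covering all vertices except two vertices of `V'`. -/
theorem stmt12 {V : Type} [Fintype V] [DecidableEq V] (G : SimpleGraph V)
    (n k b : ℕ) (hn : Fintype.card V = n) (hk : 2 ≤ k) (hkb : k ≤ b)
    (V' : Finset V) (hV' : V'.card = k)
    (p : ℕ → V)
    (hinj : ∀ a < n - k, ∀ c < n - k, p a = p c → a = c)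
    (hpath : ∀ i, i + 1 < n - k → G.Adj (p i) (p (i + 1)))
    (hcover : ∀ v : V, v ∉ V' ↔ ∃ i < n - k, p i = v)
    (B : V → V → Finset V)
    (hBsize : ∀ u v, b ≤ (B u v).card)
    (hBstruct : ∀ u v, ∀ x ∈ B u v, ∃ j, 0 < j ∧ j + 1 < n - k ∧ (j + 1) % 2 = 0 ∧
      p j = x ∧ G.Adj x u ∧ G.Adj (p (j - 1)) v ∧ G.Adj (p (j + 1)) v) :
    ∃ x y : V, x ∈ V' ∧ y ∈ V' ∧ x ≠ y ∧
      ∃ q : ℕ → V, (∀ a < n - 2, ∀ c < n - 2, q a = q c → a = c) ∧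
        (∀ i, i + 1 < n - 2 → G.Adj (q i) (q (i + 1))) ∧
        (∀ v : V, (∃ i < n - 2, q i = v) ↔ (v ≠ x ∧ v ≠ y)) := by
  classical
  -- basic cardinality facts
  have hkn : k ≤ n := by
    have := Finset.card_le_univ V'
    rw [hV', hn] at this
    exact this
  have hV'ne : V'.Nonempty := by
    rw [← Finset.card_pos, hV']; omega
  obtain ⟨v0, hv0⟩ := hV'ne
  -- enumeration of V'
  set L : List V := V'.toList with hL
  have hLlen : L.length = k := by simp [hL, hV']
  have hLnd : L.Nodup := Finset.nodup_toList V'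
  set w : ℕ → V := fun t => L.getD t v0 with hw
  have hwval : ∀ t, t < k → ∀ (h : t < L.length), w t = L[t] := by
    intro t ht h
    simp [hw, List.getD_eq_getElem?_getD, List.getElem?_eq_getElem h]
  have hwmem : ∀ t, t < k → w t ∈ V' := by
    intro t ht
    have h : t < L.length := by omega
    rw [hwval t ht h]
    rw [← Finset.mem_toList]
    exact List.getElem_mem h
  have hwinj : ∀ t < k, ∀ s < k, w t = w s → t = s := by
    intro t ht s hs he
    have h1 : t < L.length := by omega
    have h2 : s < L.length := by omega
    rw [hwval t ht h1, hwval s hs h2] at he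
    exact (List.Nodup.getElem_inj_iff hLnd).mp he
  have hpV : ∀ i, i < n - k → p i ∉ V' := by
    intro i hi
    rw [hcover]
    exact ⟨i, hi, rfl⟩
  -- greedy choice of switching vertices
  have key : ∀ m, m ≤ k - 2 → ∃ x : ℕ → V, ∃ j : ℕ → ℕ, ∀ t, t < m →
      (0 < j t ∧ j t + 1 < n - k ∧ (j t + 1) % 2 = 0 ∧
      p (j t) = x t ∧
      G.Adj (x t) (if t = 0 then p (n - k - 1) else x (t - 1)) ∧
      G.Adj (p (j t - 1)) (w t) ∧ G.Adj (p (j t + 1)) (w t) ∧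
      (∀ s, s < t → x s ≠ x t)) := by
    intro m
    induction m with
    | zero => intro _; exact ⟨fun _ => v0, fun _ => 0, by omega⟩
    | succ m ih =>
      intro hm
      obtain ⟨x, j, hx⟩ := ih (by omega)
      set e : V := if m = 0 then p (n - k - 1) else x (m - 1) with he
      set U : Finset V := (Finset.range m).image x with hU
      have hUcard : U.card ≤ m := by
        calc U.card ≤ (Finset.range m).card := Finset.card_image_le
        _ = m := Finset.card_range m
      have hne : (B e (w m) \ U).Nonempty := by
        rw [← Finset.card_pos]
        have h1 := hBsize e (w m)
        have h2 : U.card + (B e (w m) \ U).card ≥ (B e (w m)).card := by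
          calc (B e (w m)).card ≤ (U ∪ (B e (w m) \ U)).card := by
                apply Finset.card_le_card
                intro z hz
                by_cases hzU : z ∈ U
                · exact Finset.mem_union_left _ hzU
                · exact Finset.mem_union_right _ (Finset.mem_sdiff.mpr ⟨hz, hzU⟩)
          _ ≤ U.card + (B e (w m) \ U).card := Finset.card_union_le _ _
        omega
      obtain ⟨y, hy⟩ := hne
      rw [Finset.mem_sdiff] at hy
      obtain ⟨hyB, hyU⟩ := hy
      obtain ⟨jm, hjm1, hjm2, hjm3, hjm4, hjm5, hjm6, hjm7⟩ := hBstruct e (w m) y hyB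
      refine ⟨Function.update x m y, Function.update j m jm, ?_⟩
      intro t ht
      by_cases htm : t = m
      · subst htm
        simp only [Function.update_self]
        refine ⟨hjm1, hjm2, hjm3, hjm4, ?_, hjm6, hjm7, ?_⟩
        · have hee : (if t = 0 then p (n - k - 1)
              else Function.update x t y (t - 1)) = e := by
            by_cases h0 : t = 0
            · rw [if_pos h0, he, if_pos h0]
            · rw [if_neg h0, Function.update_of_ne (show t - 1 ≠ t by omega),
                he, if_neg h0]
          rw [hee]
          exact hjm5
        · intro s hs
          have e1 : Function.update x t y s = x s :=
            Function.update_of_ne (by omega) _ _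
          rw [e1]
          intro hcon
          apply hyU
          rw [hU, Finset.mem_image]
          exact ⟨s, Finset.mem_range.mpr hs, hcon⟩
      · have ht' : t < m := by omega
        obtain ⟨h1, h2, h3, h4, h5, h6, h7, h8⟩ := hx t ht'
        have e1 : Function.update x m y t = x t := Function.update_of_ne htm _ _
        have e2 : Function.update j m jm t = j t := Function.update_of_ne htm _ _
        have e3 : Function.update x m y (t - 1) = x (t - 1) :=
          Function.update_of_ne (by omega) _ _
        simp only [e1, e2, e3]
        refine ⟨h1, h2, h3, h4, h5, h6, h7, ?_⟩
        intro s hs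
        have e4 : Function.update x m y s = x s :=
          Function.update_of_ne (by omega) _ _
        rw [e4]
        exact h8 s hs
  obtain ⟨x, j, hx⟩ := key (k - 2) le_rfl
  -- properties of x and j
  have hj1 : ∀ t < k - 2, 0 < j t := fun t ht => (hx t ht).1
  have hj2 : ∀ t < k - 2, j t + 1 < n - k := fun t ht => (hx t ht).2.1
  have hj3 : ∀ t < k - 2, (j t + 1) % 2 = 0 := fun t ht => (hx t ht).2.2.1
  have hj4 : ∀ t < k - 2, p (j t) = x t := fun t ht => (hx t ht).2.2.2.1
  have hj6 : ∀ t < k - 2, G.Adj (p (j t - 1)) (w t) := fun t ht => (hx t ht).2.2.2.2.2.1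
  have hj7 : ∀ t < k - 2, G.Adj (p (j t + 1)) (w t) := fun t ht => (hx t ht).2.2.2.2.2.2.1
  have hxinj : ∀ t < k - 2, ∀ s < k - 2, x t = x s → t = s := by
    intro t ht s hs he
    by_contra hne
    rcases Nat.lt_or_ge t s with h | h
    · exact (hx s hs).2.2.2.2.2.2.2 t h he
    · exact (hx t ht).2.2.2.2.2.2.2 s (by omega) he.symm
  have hjinj : ∀ t < k - 2, ∀ s < k - 2, j t = j s → t = s := by
    intro t ht s hs he
    apply hxinj t ht s hs
    rw [← hj4 t ht, ← hj4 s hs, he]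
  have hxV : ∀ t < k - 2, x t ∉ V' := by
    intro t ht
    rw [← hj4 t ht]
    exact hpV (j t) (by have := hj2 t ht; omega)
  -- the new path
  set q : ℕ → V := fun i =>
    if i < n - k then
      (if h2 : ∃ t, t < k - 2 ∧ j t = i then w h2.choose else p i)
    else x (i - (n - k)) with hq
  have qA : ∀ i, i < n - k → (¬ ∃ t, t < k - 2 ∧ j t = i) → q i = p i := by
    intro i hi h2
    simp [hq, hi, h2]
  have qB : ∀ t, t < k - 2 → q (j t) = w t := by
    intro t ht
    have hjlt : j t < n - k := by have := hj2 t ht; omega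
    have hex : ∃ s, s < k - 2 ∧ j s = j t := ⟨t, ht, rfl⟩
    simp only [hq, if_pos hjlt, dif_pos hex]
    congr 1
    exact hjinj _ hex.choose_spec.1 t ht hex.choose_spec.2
  have qC : ∀ t, q (n - k + t) = x t := by
    intro t
    have h : ¬ (n - k + t < n - k) := by omega
    simp only [hq, if_neg h]
    congr 1
    omega
  -- classification of values of q
  have hclass : ∀ i, i < n - 2 →
      (∃ t, t < k - 2 ∧ j t = i ∧ q i = w t) ∨
      (i < n - k ∧ (∀ t, t < k - 2 → j t ≠ i) ∧ q i = p i) ∨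
      (∃ t, t < k - 2 ∧ i = n - k + t ∧ q i = x t) := by
    intro i hi
    by_cases h1 : i < n - k
    · by_cases h2 : ∃ t, t < k - 2 ∧ j t = i
      · obtain ⟨t, ht, hjt⟩ := h2
        left
        exact ⟨t, ht, hjt, by rw [← hjt]; exact qB t ht⟩
      · right; left
        refine ⟨h1, ?_, qA i h1 h2⟩
        push_neg at h2
        exact h2
    · right; right
      refine ⟨i - (n - k), by omega, by omega, ?_⟩
      simp only [hq, if_neg h1]
  -- final two vertices
  have hk2 : k - 2 < k := by omega
  have hk1 : k - 1 < k := by omega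
  refine ⟨w (k - 2), w (k - 1), hwmem _ hk2, hwmem _ hk1, ?_, q, ?_, ?_, ?_⟩
  · intro hcon
    have := hwinj _ hk2 _ hk1 hcon
    omega
  · -- injectivity
    intro a ha c hc he
    rcases hclass a ha with ⟨t, ht, hjt, hv⟩ | ⟨h1, h2, hv⟩ | ⟨t, ht, hit, hv⟩ <;>
      rcases hclass c hc with ⟨s, hs, hjs, hv'⟩ | ⟨h1', h2', hv'⟩ | ⟨s, hs, his, hv'⟩
    · rw [hv, hv'] at he
      have hts := hwinj t (by omega) s (by omega) he
      rw [hts] at hjt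
      omega
    · rw [hv, hv'] at he
      exact absurd (he ▸ hwmem t (by omega)) (hpV c h1')
    · rw [hv, hv'] at he
      exact absurd (he ▸ hwmem t (by omega)) (hxV s hs)
    · rw [hv, hv'] at he
      exact absurd (he.symm ▸ hwmem s (by omega)) (hpV a h1)
    · rw [hv, hv'] at he
      exact hinj a h1 c h1' he
    · rw [hv, hv', ← hj4 s hs] at he
      have := hinj a h1 (j s) (by have := hj2 s hs; omega) he
      exact absurd this.symm (h2 s hs)
    · rw [hv, hv'] at he
      exact absurd (he.symm ▸ hwmem s (by omega)) (hxV t ht)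
    · rw [hv, hv', ← hj4 t ht] at he
      have := hinj (j t) (by have := hj2 t ht; omega) c h1' he
      exact absurd this (h2' t ht)
    · rw [hv, hv'] at he
      have := hxinj t ht s hs he
      omega
  · -- adjacency
    intro i hi
    by_cases h1 : i + 1 < n - k
    · -- both inside the original path range
      by_cases h2 : ∃ t, t < k - 2 ∧ j t = i
      · obtain ⟨t, ht, hjt⟩ := h2
        have hqa : q i = w t := by rw [← hjt]; exact qB t ht
        have hnext : ¬ ∃ s, s < k - 2 ∧ j s = i + 1 := by
          rintro ⟨s, hs, hjs⟩
          have h3 := hj3 s hs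
          have h3' := hj3 t ht
          omega
        have hqb : q (i + 1) = p (i + 1) := qA _ h1 hnext
        rw [hqa, hqb, ← hjt]
        exact (hj7 t ht).symm
      · have hqa : q i = p i := qA i (by omega) h2
        by_cases h3 : ∃ t, t < k - 2 ∧ j t = i + 1
        · obtain ⟨t, ht, hjt⟩ := h3
          have hqb : q (i + 1) = w t := by rw [← hjt]; exact qB t ht
          rw [hqa, hqb]
          have : i = j t - 1 := by omega
          rw [this]
          exact hj6 t ht
        · have hqb : q (i + 1) = p (i + 1) := qA _ h1 h3
          rw [hqa, hqb]
          exact hpath i h1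
    · by_cases h2 : i + 1 = n - k
      · -- transition from path to appended vertices
        have h0 : 0 < k - 2 := by omega
        have hi' : i = n - k - 1 := by omega
        have hqa : q i = p (n - k - 1) := by
          rw [hi']
          apply qA _ (by omega)
          rintro ⟨t, ht, hjt⟩
          have := hj2 t ht
          omega
        have hqb : q (i + 1) = x 0 := by
          rw [h2, show n - k = n - k + 0 from rfl, qC]
        rw [hqa, hqb]
        have h5 := (hx 0 h0).2.2.2.2.1
        simp only [if_pos rfl] at h5
        exact h5.symm
      · -- within the appended vertices
        have h3 : n - k < i + 1 := by omega
        set t := i - (n - k) with hts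
        have ht1 : t + 1 < k - 2 := by omega
        have hqa : q i = x t := by
          rw [show i = n - k + t by omega, qC]
        have hqb : q (i + 1) = x (t + 1) := by
          rw [show i + 1 = n - k + (t + 1) by omega, qC]
        rw [hqa, hqb]
        have h5 := (hx (t + 1) ht1).2.2.2.2.1
        simp only [Nat.add_sub_cancel, if_neg (Nat.succ_ne_zero t)] at h5
        exact h5.symm
  · -- coverage
    intro v
    constructor
    · rintro ⟨i, hi, hqi⟩
      rcases hclass i hi with ⟨t, ht, hjt, hv⟩ | ⟨h1, h2, hv⟩ | ⟨t, ht, hit, hv⟩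
      · rw [hv] at hqi
        constructor <;> intro hcon <;> rw [← hqi] at hcon
        · have := hwinj t (by omega) (k - 2) hk2 hcon; omega
        · have := hwinj t (by omega) (k - 1) hk1 hcon; omega
      · rw [hv] at hqi
        constructor <;> intro hcon <;> rw [← hqi] at hcon
        · exact hpV i h1 (hcon ▸ hwmem _ hk2)
        · exact hpV i h1 (hcon ▸ hwmem _ hk1)
      · rw [hv] at hqi
        constructor <;> intro hcon <;> rw [← hqi] at hcon
        · exact hxV t ht (hcon ▸ hwmem _ hk2)
        · exact hxV t ht (hcon ▸ hwmem _ hk1)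
    · rintro ⟨hv1, hv2⟩
      by_cases hvV : v ∈ V'
      · -- v = w s for some s < k - 2
        have : ∃ s, s < k ∧ w s = v := by
          rw [← Finset.mem_toList, ← hL, List.mem_iff_getElem] at hvV
          obtain ⟨s, hs, hsv⟩ := hvV
          exact ⟨s, by omega, by rw [hwval s (by omega) hs]; exact hsv⟩
        obtain ⟨s, hs, hsv⟩ := this
        have hs2 : s < k - 2 := by
          by_contra hcon
          have : s = k - 2 ∨ s = k - 1 := by omega
          rcases this with h | h <;> subst h
          · exact hv1 hsv.symm
          · exact hv2 hsv.symm
        refine ⟨j s, by have := hj2 s hs2; omega, by rw [qB s hs2]; exact hsv⟩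
      · rw [hcover] at hvV
        obtain ⟨i, hi, hiv⟩ := hvV
        by_cases h2 : ∃ t, t < k - 2 ∧ j t = i
        · obtain ⟨t, ht, hjt⟩ := h2
          refine ⟨n - k + t, by omega, ?_⟩
          rw [qC, ← hj4 t ht, hjt]
          exact hiv
        · exact ⟨i, by omega, by rw [qA i hi h2]; exact hiv⟩
end

section
/- Let H be a graph and let φ be an embedding of a tree T' (with maximum degree ≤ Δ) into H. Let u ∈ V(T') already embedded, let w be a new leaf to attach to u, and let v be an unused vertex of H. Suppose there exists a vertex x ∈ φ(V(T')) such that: x = φ(t) for some t whose T'-neighbours' images are all adjacent to v in H, x is adjacent to φ(u) in H, and t is a vertex of T' with no neighbour outside T' and t ≠ u with t not adjacent to u in T'. Then there is an embedding of T' + (uw) (the tree T' with leaf w attached at u) into H, obtained by re-embedding t to v and embedding w to x. -/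
/-- Leaf-absorption switching step: given an embedding `φ` of a tree `T'` (max degree
`≤ Δ`) into `H`, a vertex `u` of `T'`, an unused vertex `v` of `H`, and a vertex
`x = φ t` with all images of `T'`-neighbours of `t` adjacent to `v`, `x` adjacent to
`φ u`, `t ≠ u` and `t` not adjacent to `u`, one obtains an embedding of `T' + (uw)`
(the new leaf `w` is modelled by `none : Option VT`) by re-embedding `t` to `v` and
embedding `w` to `x`. -/
theorem stmt13 {VT VH : Type} [Fintype VT] [DecidableEq VT]
    (T' : SimpleGraph VT) [DecidableRel T'.Adj] (H : SimpleGraph VH)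
    (hT' : T'.IsTree) (Δ : ℕ) (hdeg : ∀ a, T'.degree a ≤ Δ)
    (φ : VT → VH) (hφinj : Function.Injective φ)
    (hφhom : ∀ a b, T'.Adj a b → H.Adj (φ a) (φ b))
    (u t : VT) (v : VH) (hv : v ∉ Set.range φ)
    (x : VH) (hx : x = φ t)
    (hnb : ∀ s, T'.Adj t s → H.Adj (φ s) v)
    (hxu : H.Adj x (φ u))
    (htu : t ≠ u) (htu' : ¬ T'.Adj t u) :
    ∃ ψ : Option VT → VH, Function.Injective ψ ∧
      (∀ a b : VT, T'.Adj a b → H.Adj (ψ (some a)) (ψ (some b))) ∧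
      H.Adj (ψ (some u)) (ψ none) ∧
      ψ (some t) = v ∧ ψ none = x ∧ (∀ a : VT, a ≠ t → ψ (some a) = φ a) := by
  refine ⟨fun o => o.casesOn x (fun a => if a = t then v else φ a), ?_, ?_, ?_, ?_, ?_, ?_⟩
  · rintro (_|a) (_|b) h <;> simp only [Option.casesOn] at h
    · rfl
    · by_cases hb : b = t
      · simp [hb] at h; exact absurd (h ▸ hx ▸ ⟨t, rfl⟩ : v ∈ Set.range φ) hv
      · simp [hb] at h; exact absurd (hφinj (hx.symm.trans h).symm) hb
    · by_cases ha : a = t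
      · simp [ha] at h; exact absurd ((h.symm ▸ hx) ▸ ⟨t, rfl⟩ : v ∈ Set.range φ) hv
      · simp [ha] at h; exact absurd (hφinj (h.trans hx)) ha
    · by_cases ha : a = t <;> by_cases hb : b = t <;> simp [ha, hb] at h
      · subst ha hb; rfl
      · exact absurd (h ▸ ⟨b, rfl⟩ : v ∈ Set.range φ) hv
      · exact absurd (h ▸ ⟨a, rfl⟩ : v ∈ Set.range φ) hv
      · exact congrArg some (hφinj h)
  · intro a b hab
    by_cases ha : a = t <;> by_cases hb : b = t <;> simp [ha, hb]
    · rw [ha, hb] at hab; exact absurd hab (T'.loopless.irrefl t)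
    · rw [ha] at hab; exact (hnb b hab).symm
    · rw [hb] at hab; exact hnb a hab.symm
    · exact hφhom a b hab
  · simp [if_neg htu.symm]; exact hxu.symm
  · simp
  · rfl
  · intro a ha; simp [ha]
end
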